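/- arXiv:2306.13371 — 5 statements merged into one kernel-verified Lean document; each statement's English description precedes it below -/
import Mathlib

section
/- Let ρ ∈ (−1,1) and let U, V be independent standard Gaussian real random variables on a probability space; set Z = V and Y = ρ·V + √(1−ρ²)·U (so (Y,Z) is a centered bivariate Gaussian vector with unit variances and correlation ρ). Then P(Y > 0 and Z ≤ 0) = 1/4 − (1/(2π))·arctan(ρ/√(1−ρ²)). -/
/-!
In polar coordinates the standard Gaussian measure on `ℝ²` is `(2π)⁻¹ r e^{-r²/2} dr dθ`, and
`∫₀^∞ r e^{-r²/2} dr = 1`, so a cone of opening angle `φ` has probability `φ / (2π)`. Writing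
`ρ = sin α` and `√(1 - ρ²) = cos α` with `α = arcsin ρ`, the event is `0 < r cos (θ - α)` and
`r sin θ ≤ 0`, i.e. `θ ∈ (α - π/2, 0]`, a cone of angle `π/2 - α`; finally
`arcsin ρ = arctan (ρ / √(1 - ρ²))`.
-/

open MeasureTheory ProbabilityTheory Real Set

lemma lintegral_Ioi_ofReal_mul_exp_neg_sq_div_two :
    ∫⁻ r in Ioi (0 : ℝ), ENNReal.ofReal (r * exp (-(r ^ 2 / 2))) = 1 := by
  have h := integral_mul_cexp_neg_mul_sq (b := 1 / 2) (by norm_num)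
  norm_num at h
  have hreal : ∫ r in Ioi (0 : ℝ), r * exp (-(r ^ 2 / 2)) = 1 := by
    apply Complex.ofReal_injective
    rw [← integral_complex_ofReal, Complex.ofReal_one, ← h]
    congr 1 with r
    push_cast
    ring_nf
  have hint : IntegrableOn (fun r : ℝ ↦ r * exp (-(r ^ 2 / 2))) (Ioi 0) := by
    refine (integrable_mul_exp_neg_mul_sq (b := 1 / 2) (by norm_num)).integrableOn.congr_fun
      (fun r _ ↦ ?_) measurableSet_Ioi
    ring_nf
  have hnonneg : 0 ≤ᵐ[volume.restrict (Ioi 0)] fun r : ℝ ↦ r * exp (-(r ^ 2 / 2)) :=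
    ae_restrict_of_forall_mem measurableSet_Ioi fun r hr ↦
      mul_nonneg (le_of_lt hr) (exp_pos _).le
  rw [← ofReal_integral_eq_lintegral_ofReal hint hnonneg, hreal, ENNReal.ofReal_one]

lemma gaussianReal_prod_gaussianReal :
    (gaussianReal 0 1).prod (gaussianReal 0 1) =
      volume.withDensity fun p : ℝ × ℝ ↦
        ENNReal.ofReal ((2 * π)⁻¹ * exp (-((p.1 ^ 2 + p.2 ^ 2) / 2))) := by
  rw [gaussianReal_of_var_ne_zero 0 one_ne_zero, prod_withDensity (measurable_gaussianPDF 0 1)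
    (measurable_gaussianPDF 0 1), ← Measure.volume_eq_prod]
  congr 1 with p
  rw [gaussianPDF, gaussianPDF, ← ENNReal.ofReal_mul (gaussianPDFReal_nonneg 0 1 p.1)]
  congr 1
  have h2π : (2 * π)⁻¹ = (√(2 * π))⁻¹ * (√(2 * π))⁻¹ := by
    rw [← mul_inv, mul_self_sqrt (by positivity)]
  simp only [gaussianPDFReal, NNReal.coe_one, mul_one, sub_zero, h2π]
  rw [show -((p.1 ^ 2 + p.2 ^ 2) / 2) = -p.1 ^ 2 / 2 + -p.2 ^ 2 / 2 by ring, exp_add]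
  ring

lemma gaussianReal_prod_gaussianReal_apply_of_polarCoord {S : Set (ℝ × ℝ)} {T : Set ℝ}
    (hS : MeasurableSet S) (hT : MeasurableSet T) (hTπ : T ⊆ Ioo (-π) π)
    (hST : ∀ r > 0, ∀ θ ∈ Ioo (-π) π, polarCoord.symm (r, θ) ∈ S ↔ θ ∈ T) :
    (gaussianReal 0 1).prod (gaussianReal 0 1) S = ENNReal.ofReal (2 * π)⁻¹ * volume T := by
  set f : ℝ × ℝ → ENNReal := fun p ↦
    ENNReal.ofReal ((2 * π)⁻¹ * exp (-((p.1 ^ 2 + p.2 ^ 2) / 2)))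
  have hpolar : ∀ p ∈ polarCoord.target,
      ENNReal.ofReal p.1 • S.indicator f (polarCoord.symm p) =
      ENNReal.ofReal (2 * π)⁻¹ *
        (ENNReal.ofReal (p.1 * exp (-(p.1 ^ 2 / 2))) * T.indicator 1 p.2) := by
    rintro ⟨r, θ⟩ ⟨hr : 0 < r, hθ⟩
    by_cases hθT : θ ∈ T
    · have hnorm : (polarCoord.symm (r, θ)).1 ^ 2 + (polarCoord.symm (r, θ)).2 ^ 2 = r ^ 2 := by
        rw [polarCoord_symm_apply, mul_pow, mul_pow, ← mul_add, cos_sq_add_sin_sq, mul_one]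
      rw [indicator_of_mem ((hST r hr θ hθ).2 hθT), indicator_of_mem hθT, Pi.one_apply,
        mul_one, smul_eq_mul]
      dsimp only [f]
      rw [hnorm, ← ENNReal.ofReal_mul hr.le, ← ENNReal.ofReal_mul (by positivity)]
      ring_nf
    · rw [indicator_of_notMem (mt (hST r hr θ hθ).1 hθT), indicator_of_notMem hθT]
      simp
  rw [gaussianReal_prod_gaussianReal, withDensity_apply _ hS, ← lintegral_indicator hS,
    ← lintegral_comp_polarCoord_symm,
    setLIntegral_congr_fun polarCoord.open_target.measurableSet hpolar, lintegral_const_mul,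
    polarCoord_target, Measure.volume_eq_prod, ← Measure.prod_restrict,
    lintegral_prod_mul (f := fun r ↦ ENNReal.ofReal (r * exp (-(r ^ 2 / 2)))),
    lintegral_Ioi_ofReal_mul_exp_neg_sq_div_two, one_mul,
    lintegral_indicator_one hT, Measure.restrict_apply hT, inter_eq_left.2 hTπ]
  all_goals fun_prop

lemma cos_sub_pos_and_sin_nonpos_iff {α θ : ℝ} (hα : α ∈ Ioo (-(π / 2)) (π / 2))
    (hθ : θ ∈ Ioo (-π) π) : 0 < cos (θ - α) ∧ sin θ ≤ 0 ↔ θ ∈ Ioc (α - π / 2) 0 := by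
  obtain ⟨hα₁, hα₂⟩ := hα
  obtain ⟨hθ₁, hθ₂⟩ := hθ
  constructor
  · rintro ⟨hcos, hsin⟩
    have hθ₀ : θ ≤ 0 := not_lt.1 fun h ↦ (sin_pos_of_pos_of_lt_pi h hθ₂).not_ge hsin
    refine ⟨not_le.1 fun h ↦ hcos.not_ge ?_, hθ₀⟩
    rw [← cos_neg]
    exact cos_nonpos_of_pi_div_two_le_of_le (by linarith) (by linarith)
  · rintro ⟨h₁, h₂⟩
    exact ⟨cos_pos_of_mem_Ioo ⟨by linarith, by linarith⟩,
      sin_nonpos_of_nonpos_of_neg_pi_le h₂ hθ₁.le⟩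

lemma gaussianReal_prod_gaussianReal_wedge {α : ℝ} (hα : α ∈ Ioo (-(π / 2)) (π / 2)) :
    (gaussianReal 0 1).prod (gaussianReal 0 1) {p | 0 < sin α * p.2 + cos α * p.1 ∧ p.2 ≤ 0} =
      ENNReal.ofReal ((π / 2 - α) / (2 * π)) := by
  have hS : MeasurableSet {p : ℝ × ℝ | 0 < sin α * p.2 + cos α * p.1 ∧ p.2 ≤ 0} := by
    measurability
  rw [gaussianReal_prod_gaussianReal_apply_of_polarCoord (T := Ioc (α - π / 2) 0) hS
    measurableSet_Ioc, volume_Ioc, ← ENNReal.ofReal_mul (by positivity)]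
  · congr 1
    field_simp
    ring
  · intro θ hθ
    exact ⟨by linarith [hθ.1, hα.1, pi_pos], by linarith [hθ.2, pi_pos]⟩
  · intro r hr θ hθ
    have hcos : sin α * (r * sin θ) + cos α * (r * cos θ) = r * cos (θ - α) := by
      rw [cos_sub]; ring
    rw [polarCoord_symm_apply, ← cos_sub_pos_and_sin_nonpos_iff hα hθ]
    have hsin : r * sin θ ≤ 0 ↔ sin θ ≤ 0 := by
      simpa using mul_le_mul_iff_right₀ (b := sin θ) (c := 0) hr
    simp only [mem_ofPred_eq, hcos, mul_pos_iff_of_pos_left hr, hsin]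

/-- For a centered bivariate Gaussian pair `(Y, Z)` with unit variances and correlation
`ρ ∈ (-1, 1)`, built from independent standard Gaussians `U, V` as `Z = V` and
`Y = ρ V + √(1-ρ²) U`, we have
`P(Y > 0 ∧ Z ≤ 0) = 1/4 - (1/(2π)) arctan(ρ/√(1-ρ²))`. -/
theorem gaussian_quadrant_probability
    {Ω : Type*} [MeasurableSpace Ω] (P : Measure Ω) [IsProbabilityMeasure P]
    (ρ : ℝ) (hρ : ρ ∈ Set.Ioo (-1 : ℝ) 1)
    (U V : Ω → ℝ) (hUm : Measurable U) (hVm : Measurable V)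
    (hU : P.map U = gaussianReal 0 1) (hV : P.map V = gaussianReal 0 1)
    (hUV : IndepFun U V P)
    (Y Z : Ω → ℝ)
    (hY : Y = fun ω => ρ * V ω + Real.sqrt (1 - ρ ^ 2) * U ω)
    (hZ : Z = V) :
    (P {ω | 0 < Y ω ∧ Z ω ≤ 0}).toReal
      = 1 / 4 - 1 / (2 * π) * Real.arctan (ρ / Real.sqrt (1 - ρ ^ 2)) := by
  set α := arcsin ρ
  have hα : α ∈ Ioo (-(π / 2)) (π / 2) :=
    ⟨neg_pi_div_two_lt_arcsin.2 hρ.1, arcsin_lt_pi_div_two.2 hρ.2⟩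
  have hUV_law : P.map (fun ω ↦ (U ω, V ω)) = (gaussianReal 0 1).prod (gaussianReal 0 1) := by
    rw [(indepFun_iff_map_prod_eq_prod_map_map hUm.aemeasurable hVm.aemeasurable).1 hUV, hU, hV]
  have hevent : {ω | 0 < Y ω ∧ Z ω ≤ 0} =
      (fun ω ↦ (U ω, V ω)) ⁻¹' {p | 0 < sin α * p.2 + cos α * p.1 ∧ p.2 ≤ 0} := by
    rw [sin_arcsin hρ.1.le hρ.2.le, cos_arcsin, hY, hZ]
    rfl
  rw [hevent, ← Measure.map_apply (hUm.prodMk hVm) (by measurability), hUV_law,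
    gaussianReal_prod_gaussianReal_wedge hα, ENNReal.toReal_ofReal, ← arcsin_eq_arctan hρ]
  · field_simp
    ring
  · exact div_nonneg (by linarith [hα.2]) (by positivity)
end

section
/- (Theorem 1.) Let 𝓗 ∈ (0,1), σ > 0, m > 0, and set ρ = 2^{2𝓗−1} − 1. Let U, V be independent standard Gaussian real random variables and set Z = σ·m^{𝓗}·V and Y = σ·m^{𝓗}·(ρ·V + √(1−ρ²)·U), so that (Y,Z) is a centered bivariate Gaussian vector with Var(Y) = Var(Z) = σ²m^{2𝓗} and Cov(Y,Z) = σ²m^{2𝓗}ρ, i.e. exactly the joint law of the consecutive increments (B^𝓗_{2m} − B^𝓗_m, B^𝓗_m − B^𝓗_0) of a fractional Brownian motion with Hurst exponent 𝓗 and volatility σ. Then the market information I²_m := 1 − H(1_{Y>0} | 1_{Z>0}) satisfies I²_m = 1 + f(1/2 − (1/π)·arctan(ρ/√(1−ρ²))) + f(1/2 + (1/π)·arctan(ρ/√(1−ρ²))). -/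
/-
In polar coordinates the standard Gaussian measure on `ℝ²` has density `(2π)⁻¹ r e^{-r²/2}`,
so a set cut out by an angular sector of opening `b - a` has mass `(b - a) / (2π)`.
With `α = arcsin ρ` we have `Y > 0 ↔ cos α · U + sin α · V > 0` and `Z > 0 ↔ V > 0`: both
events are half-planes of mass `1/2`, and their intersection is a sector of opening `π/2 + α`,
whence Sheppard's formula `P(Y > 0, Z > 0) = 1/4 + α/(2π)`. The conditional entropy of two
fair indicators depends only on this probability, and `arcsin ρ = arctan (ρ / √(1 - ρ²))`.
-/

open MeasureTheory ProbabilityTheory Real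

/-- `f x = x log₂ x`, with the convention `f 0 = 0`
(automatic in Lean since `Real.logb 2 0 = 0`). -/
noncomputable def f (x : ℝ) : ℝ := x * Real.logb 2 x

/-- The conditional Shannon entropy (base 2) `H(1_A | 1_B)` of the indicator of the event `A`
given the indicator of the event `B`:
`H(X|W) = -∑_w P(W=w) ∑_x P(X=x|W=w) log₂ P(X=x|W=w)`, with conditional probabilities
written as ratios `P(X=x ∩ W=w)/P(W=w)`. -/
noncomputable def condEntropyInd {Ω : Type*} [MeasurableSpace Ω] (P : Measure Ω)
    (A B : Set Ω) : ℝ :=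
  -((P B).toReal *
      (f ((P (A ∩ B)).toReal / (P B).toReal) + f ((P (Aᶜ ∩ B)).toReal / (P B).toReal)) +
    (P Bᶜ).toReal *
      (f ((P (A ∩ Bᶜ)).toReal / (P Bᶜ).toReal) + f ((P (Aᶜ ∩ Bᶜ)).toReal / (P Bᶜ).toReal)))

open Set

theorem condEntropyInd_of_measureReal_eq_half {Ω : Type*} [MeasurableSpace Ω]
    {P : Measure Ω} [IsProbabilityMeasure P] {A B : Set Ω} (hA : MeasurableSet A)
    (hB : MeasurableSet B) (hPA : P.real A = 1 / 2) (hPB : P.real B = 1 / 2) :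
    condEntropyInd P A B = -(f (2 * P.real (A ∩ B)) + f (1 - 2 * P.real (A ∩ B))) := by
  have hPBc : P.real Bᶜ = 1 / 2 := by
    rw [measureReal_compl hB, probReal_univ, hPB]; norm_num
  have hAcB : P.real (Aᶜ ∩ B) = 1 / 2 - P.real (A ∩ B) := by
    have h := measureReal_inter_add_sdiff (μ := P) (s := B) hA
    rw [inter_comm B A, sdiff_eq, inter_comm B Aᶜ] at h
    linarith
  have hABc : P.real (A ∩ Bᶜ) = 1 / 2 - P.real (A ∩ B) := by
    have h := measureReal_inter_add_sdiff (μ := P) (s := A) hB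
    rw [sdiff_eq] at h
    linarith
  have hAcBc : P.real (Aᶜ ∩ Bᶜ) = P.real (A ∩ B) := by
    have h := measureReal_inter_add_sdiff (μ := P) (s := Bᶜ) hA
    rw [inter_comm Bᶜ A, sdiff_eq, inter_comm Bᶜ Aᶜ] at h
    linarith
  simp only [condEntropyInd, ← measureReal_def, hPB, hPBc, hAcB, hABc, hAcBc]
  ring_nf

theorem integral_Ioi_mul_exp_neg_mul_sq {b : ℝ} (hb : 0 < b) :
    ∫ r in Ioi (0 : ℝ), r * exp (-b * r ^ 2) = (2 * b)⁻¹ := by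
  have h := integral_mul_cexp_neg_mul_sq (b := (b : ℂ)) (by simpa using hb)
  simp_rw [← Complex.ofReal_pow, ← Complex.ofReal_neg, ← Complex.ofReal_mul,
    ← Complex.ofReal_exp, ← Complex.ofReal_mul, integral_complex_ofReal] at h
  exact_mod_cast h

theorem gaussianPDFReal_mul_polar (r θ : ℝ) :
    gaussianPDFReal 0 1 (r * cos θ) * gaussianPDFReal 0 1 (r * sin θ)
      = (2 * π)⁻¹ * exp (-(1 / 2) * r ^ 2) := by
  have hexp : -(r * cos θ) ^ 2 / 2 + -(r * sin θ) ^ 2 / 2 = -(1 / 2) * r ^ 2 := by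
    linear_combination (-(r ^ 2) / 2) * sin_sq_add_cos_sq θ
  simp only [gaussianPDFReal, NNReal.coe_one, mul_one, sub_zero]
  rw [mul_mul_mul_comm, ← exp_add, hexp, ← mul_inv, mul_self_sqrt (by positivity)]

local notation "γ₂" => Measure.prod (gaussianReal 0 1) (gaussianReal 0 1)

theorem measureReal_gaussianReal_prod_eq_setIntegral {S : Set (ℝ × ℝ)} (hS : MeasurableSet S) :
    (γ₂).real S = ∫ p in S, gaussianPDFReal 0 1 p.1 * gaussianPDFReal 0 1 p.2 := by
  rw [gaussianReal_of_var_ne_zero 0 one_ne_zero, prod_withDensity (measurable_gaussianPDF 0 1)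
    (measurable_gaussianPDF 0 1), measureReal_def, withDensity_apply _ hS,
    ← Measure.volume_eq_prod, integral_eq_lintegral_of_nonneg_ae]
  · simp only [gaussianPDF, ENNReal.ofReal_mul (gaussianPDFReal_nonneg 0 1 _)]
  · exact .of_forall fun _ => mul_nonneg (gaussianPDFReal_nonneg 0 1 _)
      (gaussianPDFReal_nonneg 0 1 _)
  · fun_prop

theorem measureReal_gaussianReal_prod_of_polar_sector {S : Set (ℝ × ℝ)} (hS : MeasurableSet S)
    {a b : ℝ} (hab : a ≤ b) (ha : -π ≤ a) (hb : b ≤ π)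
    (hmem : ∀ r θ, 0 < r → θ ∈ Ioo (-π) π →
      ((r * cos θ, r * sin θ) ∈ S ↔ θ ∈ Ioo a b)) :
    (γ₂).real S = (b - a) / (2 * π) := by
  set φ₂ : ℝ × ℝ → ℝ := fun p => gaussianPDFReal 0 1 p.1 * gaussianPDFReal 0 1 p.2
  have hpolar : ∀ p ∈ polarCoord.target, p.1 • S.indicator φ₂ (polarCoord.symm p)
      = (Ioi 0 ×ˢ Ioo a b).indicator
          (fun q => q.1 * exp (-(1 / 2) * q.1 ^ 2) * (2 * π)⁻¹) p := by
    rintro ⟨r, θ⟩ ⟨hr, hθ⟩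
    by_cases hθab : θ ∈ Ioo a b
    · rw [polarCoord_symm_apply, indicator_of_mem ((hmem r θ hr hθ).2 hθab),
        indicator_of_mem (mk_mem_prod hr hθab), smul_eq_mul]
      simp only [φ₂, gaussianPDFReal_mul_polar]
      ring
    · rw [polarCoord_symm_apply, indicator_of_notMem (mt (hmem r θ hr hθ).1 hθab),
        indicator_of_notMem (fun h => hθab h.2), smul_zero]
  have hsector : Ioi 0 ×ˢ Ioo a b ⊆ polarCoord.target :=
    prod_mono le_rfl (Ioo_subset_Ioo ha hb)
  rw [measureReal_gaussianReal_prod_eq_setIntegral hS, ← integral_indicator hS,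
    ← integral_comp_polarCoord_symm,
    setIntegral_congr_fun polarCoord.open_target.measurableSet hpolar,
    setIntegral_indicator (measurableSet_Ioi.prod measurableSet_Ioo),
    inter_eq_right.mpr hsector, Measure.volume_eq_prod,
    setIntegral_prod_mul (fun r => r * exp (-(1 / 2) * r ^ 2)) (fun _ => (2 * π)⁻¹),
    integral_Ioi_mul_exp_neg_mul_sq (by norm_num), setIntegral_const,
    Real.volume_real_Ioo_of_le hab, smul_eq_mul]
  field_simp

def halfPlane (α : ℝ) : Set (ℝ × ℝ) := {p | 0 < cos α * p.1 + sin α * p.2}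

theorem measurableSet_halfPlane (α : ℝ) : MeasurableSet (halfPlane α) :=
  measurableSet_lt measurable_const (by fun_prop)

theorem cos_pos_iff_mem_Ioo {x : ℝ} (h₁ : -(3 * π / 2) < x) (h₂ : x < 3 * π / 2) :
    0 < cos x ↔ x ∈ Ioo (-(π / 2)) (π / 2) := by
  refine ⟨fun hx => ⟨?_, ?_⟩, cos_pos_of_mem_Ioo⟩
  · by_contra! h
    have h' := cos_nonpos_of_pi_div_two_le_of_le (x := -x) (by linarith) (by linarith)
    rw [cos_neg] at h'
    linarith
  · by_contra! h
    linarith [cos_nonpos_of_pi_div_two_le_of_le h (by linarith)]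

theorem polar_mem_halfPlane_iff {α r θ : ℝ} (hr : 0 < r) (hα : α ∈ Icc (-(π / 2)) (π / 2))
    (hθ : θ ∈ Ioo (-π) π) :
    (r * cos θ, r * sin θ) ∈ halfPlane α ↔ θ ∈ Ioo (α - π / 2) (α + π / 2) := by
  have hcos : cos α * (r * cos θ) + sin α * (r * sin θ) = r * cos (θ - α) := by
    rw [cos_sub]; ring
  simp only [halfPlane, mem_ofPred_eq, hcos, mul_pos_iff_of_pos_left hr]
  rw [cos_pos_iff_mem_Ioo (by linarith [hα.2, hθ.1]) (by linarith [hα.1, hθ.2])]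
  simp only [mem_Ioo]
  constructor <;> rintro ⟨h₁, h₂⟩ <;> constructor <;> linarith

theorem measureReal_gaussianReal_prod_halfPlane_inter {α β : ℝ} (hα : -(π / 2) ≤ α)
    (hαβ : α ≤ β) (hβ : β ≤ π / 2) :
    (γ₂).real (halfPlane α ∩ halfPlane β) = 1 / 2 - (β - α) / (2 * π) := by
  have hπ := pi_pos
  rw [measureReal_gaussianReal_prod_of_polar_sector
    ((measurableSet_halfPlane α).inter (measurableSet_halfPlane β))
    (a := β - π / 2) (b := α + π / 2) (by linarith) (by linarith) (by linarith)]
  · field_simp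
    ring
  · intro r θ hr hθ
    rw [mem_inter_iff, polar_mem_halfPlane_iff hr ⟨hα, by linarith⟩ hθ,
      polar_mem_halfPlane_iff hr ⟨by linarith, hβ⟩ hθ]
    simp only [mem_Ioo]
    constructor
    · rintro ⟨⟨-, h₂⟩, h₃, -⟩
      exact ⟨h₃, h₂⟩
    · rintro ⟨h₁, h₂⟩
      exact ⟨⟨by linarith, h₂⟩, h₁, by linarith⟩

theorem measureReal_gaussianReal_prod_halfPlane {α : ℝ} (hα : α ∈ Icc (-(π / 2)) (π / 2)) :
    (γ₂).real (halfPlane α) = 1 / 2 := by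
  simpa using measureReal_gaussianReal_prod_halfPlane_inter hα.1 le_rfl hα.2

theorem measureReal_preimage_prodMk_of_indepFun {Ω : Type*} [MeasurableSpace Ω]
    {P : Measure Ω} [IsProbabilityMeasure P] {U V : Ω → ℝ} (hUm : Measurable U)
    (hVm : Measurable V) (hU : P.map U = gaussianReal 0 1) (hV : P.map V = gaussianReal 0 1)
    (hUV : IndepFun U V P) {T : Set (ℝ × ℝ)} (hT : MeasurableSet T) :
    P.real ((fun ω => (U ω, V ω)) ⁻¹' T) = (γ₂).real T := by
  rw [← map_measureReal_apply (hUm.prodMk hVm) hT, (indepFun_iff_map_prod_eq_prod_map_map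
    hUm.aemeasurable hVm.aemeasurable).1 hUV, hU, hV]

theorem two_rpow_sub_one_mem_Ioo {H : ℝ} (hH : H < 1) :
    (2 : ℝ) ^ (2 * H - 1) - 1 ∈ Ioo (-1) 1 := by
  have h2H : (2 : ℝ) ^ (2 * H - 1) < 2 ^ (1 : ℝ) :=
    rpow_lt_rpow_of_exponent_lt one_lt_two (by linarith)
  rw [rpow_one] at h2H
  constructor <;> linarith [rpow_pos_of_pos two_pos (2 * H - 1)]

/-- **Theorem 1.** The market information `I²_m = 1 - H(1_{Y>0} | 1_{Z>0})` of the pair of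
consecutive increments `(Y, Z) = (B^𝓗_{2m} - B^𝓗_m, B^𝓗_m - B^𝓗_0)` of a fractional Brownian
motion with Hurst exponent `𝓗` and volatility `σ` — a centered Gaussian vector with
`Var Y = Var Z = σ² m^(2𝓗)` and correlation `ρ = 2^(2𝓗-1) - 1`, realized as
`Z = σ m^𝓗 V`, `Y = σ m^𝓗 (ρ V + √(1-ρ²) U)` with `U, V` independent standard Gaussians —
equals `1 + f(1/2 - (1/π) arctan(ρ/√(1-ρ²))) + f(1/2 + (1/π) arctan(ρ/√(1-ρ²)))`. -/
theorem market_information_fbm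
    {Ω : Type*} [MeasurableSpace Ω] (P : Measure Ω) [IsProbabilityMeasure P]
    (H σ m : ℝ) (hH : H ∈ Set.Ioo (0 : ℝ) 1) (hσ : 0 < σ) (hm : 0 < m)
    (ρ : ℝ) (hρ : ρ = (2 : ℝ) ^ (2 * H - 1) - 1)
    (U V : Ω → ℝ) (hUm : Measurable U) (hVm : Measurable V)
    (hU : P.map U = gaussianReal 0 1) (hV : P.map V = gaussianReal 0 1)
    (hUV : IndepFun U V P)
    (Y Z : Ω → ℝ)
    (hY : Y = fun ω => σ * m ^ H * (ρ * V ω + Real.sqrt (1 - ρ ^ 2) * U ω))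
    (hZ : Z = fun ω => σ * m ^ H * V ω) :
    1 - condEntropyInd P {ω | 0 < Y ω} {ω | 0 < Z ω}
      = 1 + f (1 / 2 - 1 / π * Real.arctan (ρ / Real.sqrt (1 - ρ ^ 2)))
          + f (1 / 2 + 1 / π * Real.arctan (ρ / Real.sqrt (1 - ρ ^ 2))) := by
  have hρ_mem : ρ ∈ Ioo (-1) 1 := hρ ▸ two_rpow_sub_one_mem_Ioo hH.2
  rw [← arcsin_eq_arctan hρ_mem]
  set α := arcsin ρ
  have hα : α ∈ Icc (-(π / 2)) (π / 2) :=
    ⟨neg_pi_div_two_le_arcsin ρ, arcsin_le_pi_div_two ρ⟩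
  have hπ := pi_pos
  have hc : 0 < σ * m ^ H := mul_pos hσ (rpow_pos_of_pos hm H)
  set W : Ω → ℝ × ℝ := fun ω => (U ω, V ω)
  have hlaw : ∀ T, MeasurableSet T → P.real (W ⁻¹' T) = (γ₂).real T :=
    fun _ => measureReal_preimage_prodMk_of_indepFun hUm hVm hU hV hUV
  have hYpos : {ω | 0 < Y ω} = W ⁻¹' halfPlane α := by
    ext ω
    simp only [hY, halfPlane, W, mem_ofPred_eq, mem_preimage, mul_pos_iff_of_pos_left hc, α,
      cos_arcsin, sin_arcsin hρ_mem.1.le hρ_mem.2.le, add_comm]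
  have hZpos : {ω | 0 < Z ω} = W ⁻¹' halfPlane (π / 2) := by
    ext ω
    simp [hZ, halfPlane, W, mul_pos_iff_of_pos_left hc]
  have hq : 2 * (1 / 2 - (π / 2 - α) / (2 * π)) = 1 / 2 + 1 / π * α := by
    field_simp
    ring
  have hW : Measurable W := hUm.prodMk hVm
  have hhalf : ∀ β ∈ Icc (-(π / 2)) (π / 2), P.real (W ⁻¹' halfPlane β) = 1 / 2 :=
    fun β hβ => by
      rw [hlaw _ (measurableSet_halfPlane β), measureReal_gaussianReal_prod_halfPlane hβ]
  rw [hYpos, hZpos, condEntropyInd_of_measureReal_eq_half (hW (measurableSet_halfPlane _))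
    (hW (measurableSet_halfPlane _)) (hhalf α hα) (hhalf _ ⟨by linarith, le_rfl⟩),
    ← preimage_inter, hlaw _ ((measurableSet_halfPlane _).inter (measurableSet_halfPlane _)),
    measureReal_gaussianReal_prod_halfPlane_inter hα.1 hα.2 le_rfl, hq]
  ring_nf
end

section
/- Let 𝓗 ∈ (0,1), σ > 0, θ > 0, and let (B_u)_{u>0} be a family of centered square-integrable real random variables with E[B_u·B_v] = (σ²/2)·(u^{2𝓗} + v^{2𝓗} − |u−v|^{2𝓗}) for all u,v > 0. Define the delampertized process X_t = e^{−𝓗θt}·B_{e^{θt}} for t ∈ ℝ. Then for all s ≤ t, E[X_s·X_t] = (σ²/2)·h(θ·(t−s)), where h(x) = 2·cosh(𝓗x) − (2·sinh(x/2))^{2𝓗}. In particular E[X_t²] = σ² for every t, so the covariance of X depends only on the time lag t − s. -/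
/-!
Writing `u = e^{θs} ≤ v = e^{θt}`, the prefactor `e^{-𝓗θ(s+t)} = (uv)^{-𝓗}` turns `u^{2𝓗}` and
`v^{2𝓗}` into `e^{∓𝓗θ(t-s)}`, whose sum is `2 cosh(𝓗θ(t-s))`, and turns `|u - v|^{2𝓗}` into
`((v - u)/√(uv))^{2𝓗} = (2 sinh(θ(t-s)/2))^{2𝓗}`. At `s = t` the sinh term vanishes and
`cosh 0 = 1`, giving the variance `σ²`.
-/

open MeasureTheory Real

lemma exp_sub_exp_eq_exp_mul_two_mul_sinh (a b : ℝ) :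
    exp b - exp a = exp ((a + b) / 2) * (2 * sinh ((b - a) / 2)) := by
  rw [sinh_eq, mul_div_cancel₀ _ two_ne_zero, mul_sub, ← exp_add, ← exp_add]
  ring_nf

lemma exp_neg_mul_mul_fbm_kernel_exp (H a b : ℝ) (hab : a ≤ b) :
    exp (-(H * a)) * exp (-(H * b)) *
        (exp a ^ (2 * H) + exp b ^ (2 * H) - |exp a - exp b| ^ (2 * H)) =
      2 * cosh (H * (b - a)) - (2 * sinh ((b - a) / 2)) ^ (2 * H) := by
  have hsinh : 0 ≤ 2 * sinh ((b - a) / 2) :=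
    mul_nonneg zero_le_two (sinh_nonneg_iff.2 (div_nonneg (sub_nonneg.2 hab) zero_le_two))
  have hprefactor : exp (-(H * a)) * exp (-(H * b)) = exp (-((a + b) / 2)) ^ (2 * H) := by
    rw [← exp_mul, ← exp_add]; ring_nf
  have hdiff : |exp a - exp b| ^ (2 * H) =
      exp ((a + b) / 2) ^ (2 * H) * (2 * sinh ((b - a) / 2)) ^ (2 * H) := by
    rw [abs_sub_comm, abs_of_nonneg (sub_nonneg.2 (exp_le_exp.2 hab)),
      exp_sub_exp_eq_exp_mul_two_mul_sinh, mul_rpow (exp_pos _).le hsinh]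
  rw [hdiff, hprefactor, ← exp_mul, ← exp_mul, ← exp_mul, ← exp_mul, cosh_eq]
  simp only [mul_sub, mul_add, ← mul_assoc, ← exp_add]
  ring_nf
  rw [exp_zero, one_mul]

theorem delampertized_fbm_covariance_general
    {Ω : Type*} [MeasurableSpace Ω] (P : Measure Ω)
    (H σ θ : ℝ) (hH : H ∈ Set.Ioo (0 : ℝ) 1) (hθ : 0 < θ)
    (B : ℝ → Ω → ℝ)
    (hcov : ∀ u v : ℝ, 0 < u → 0 < v →
      ∫ ω, B u ω * B v ω ∂P = σ ^ 2 / 2 * (u ^ (2 * H) + v ^ (2 * H) - |u - v| ^ (2 * H)))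
    (X : ℝ → Ω → ℝ)
    (hX : ∀ t : ℝ, X t = fun ω => Real.exp (-(H * θ * t)) * B (Real.exp (θ * t)) ω)
    (h : ℝ → ℝ)
    (hh : ∀ x : ℝ, h x = 2 * Real.cosh (H * x) - (2 * Real.sinh (x / 2)) ^ (2 * H)) :
    (∀ s t : ℝ, s ≤ t → ∫ ω, X s ω * X t ω ∂P = σ ^ 2 / 2 * h (θ * (t - s))) ∧
    (∀ t : ℝ, ∫ ω, X t ω ^ 2 ∂P = σ ^ 2) := by
  have hcovX : ∀ s t : ℝ, s ≤ t → ∫ ω, X s ω * X t ω ∂P = σ ^ 2 / 2 * h (θ * (t - s)) := by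
    intro s t hst
    calc ∫ ω, X s ω * X t ω ∂P
        = exp (-(H * (θ * s))) * exp (-(H * (θ * t))) *
            ∫ ω, B (exp (θ * s)) ω * B (exp (θ * t)) ω ∂P := by
          rw [← integral_const_mul, hX, hX]; simp only [mul_assoc]; congr with ω; ring
      _ = σ ^ 2 / 2 * h (θ * t - θ * s) := by
          rw [hcov _ _ (exp_pos _) (exp_pos _), mul_left_comm,
            exp_neg_mul_mul_fbm_kernel_exp H _ _ (by gcongr), hh]
      _ = σ ^ 2 / 2 * h (θ * (t - s)) := by rw [mul_sub]
  have hh_zero : h 0 = 2 := by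
    rw [hh, mul_zero, zero_div, sinh_zero, mul_zero, zero_rpow (by linarith [hH.1]), cosh_zero]
    norm_num
  refine ⟨hcovX, fun t => ?_⟩
  simp_rw [sq (X t _), hcovX t t le_rfl, sub_self, mul_zero, hh_zero]
  ring

/-- If `(B_u)_{u>0}` is a centered square-integrable family with the fBm covariance
`E[B_u B_v] = (σ²/2)(u^(2𝓗) + v^(2𝓗) - |u-v|^(2𝓗))`, then the delampertized process
`X_t = e^(-𝓗θt) B_{e^(θt)}` satisfies, for all `s ≤ t`,
`E[X_s X_t] = (σ²/2) h(θ(t-s))` with `h(x) = 2 cosh(𝓗x) - (2 sinh(x/2))^(2𝓗)`;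
in particular `E[X_t²] = σ²` for every `t`. -/
theorem delampertized_fbm_covariance
    {Ω : Type*} [MeasurableSpace Ω] (P : Measure Ω) [IsProbabilityMeasure P]
    (H σ θ : ℝ) (hH : H ∈ Set.Ioo (0 : ℝ) 1) (hσ : 0 < σ) (hθ : 0 < θ)
    (B : ℝ → Ω → ℝ)
    (hL2 : ∀ u : ℝ, 0 < u → MemLp (B u) 2 P)
    (hmean : ∀ u : ℝ, 0 < u → ∫ ω, B u ω ∂P = 0)
    (hcov : ∀ u v : ℝ, 0 < u → 0 < v →
      ∫ ω, B u ω * B v ω ∂P = σ ^ 2 / 2 * (u ^ (2 * H) + v ^ (2 * H) - |u - v| ^ (2 * H)))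
    (X : ℝ → Ω → ℝ)
    (hX : ∀ t : ℝ, X t = fun ω => Real.exp (-(H * θ * t)) * B (Real.exp (θ * t)) ω)
    (h : ℝ → ℝ)
    (hh : ∀ x : ℝ, h x = 2 * Real.cosh (H * x) - (2 * Real.sinh (x / 2)) ^ (2 * H)) :
    (∀ s t : ℝ, s ≤ t → ∫ ω, X s ω * X t ω ∂P = σ ^ 2 / 2 * h (θ * (t - s))) ∧
    (∀ t : ℝ, ∫ ω, X t ω ^ 2 ∂P = σ ^ 2) :=
  delampertized_fbm_covariance_general P H σ θ hH hθ B hcov X hX h hh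
end

section
/- For ρ ∈ (−1,1) define g(ρ) = 1 + f(1/2 − (1/π)·arctan(ρ/√(1−ρ²))) + f(1/2 + (1/π)·arctan(ρ/√(1−ρ²))), where f(x) = x·log₂(x) for x > 0 and f(0) = 0. Then g(ρ) ≥ 0 for all ρ ∈ (−1,1), and g(ρ) = 0 if and only if ρ = 0. Consequently, the market information I²_m = g(2^{2𝓗−1} − 1) of a fractional Brownian motion with Hurst exponent 𝓗 ∈ (0,1) is zero if and only if 𝓗 = 1/2. -/
open Real

noncomputable def g (ρ : ℝ) : ℝ :=
  1 + f (1 / 2 - 1 / π * Real.arctan (ρ / Real.sqrt (1 - ρ ^ 2)))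
    + f (1 / 2 + 1 / π * Real.arctan (ρ / Real.sqrt (1 - ρ ^ 2)))

/-!
Writing `p = 1/2 + arctan(ρ/√(1-ρ²))/π`, the two `f`-terms of `g ρ` are `f p + f (1 - p)`,
minus the binary entropy of `p` in bits. So `g ρ = 1 - H₂(p)`, which is nonnegative and
vanishes exactly at `p = 1/2`, i.e. at `ρ = 0`. For `ρ = 2^(2𝓗-1) - 1` this is `𝓗 = 1/2`.
-/

lemma f_add_f_one_sub (p : ℝ) : f p + f (1 - p) = -binEntropy p / log 2 := by
  simp only [f, logb, binEntropy, log_inv]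
  ring

lemma g_eq_one_sub_binEntropy (ρ : ℝ) :
    g ρ = 1 - binEntropy (1 / 2 + 1 / π * arctan (ρ / √(1 - ρ ^ 2))) / log 2 := by
  rw [g]
  set t := 1 / π * arctan (ρ / √(1 - ρ ^ 2))
  have h := f_add_f_one_sub (1 / 2 + t)
  rw [show 1 - (1 / 2 + t) = 1 / 2 - t by ring] at h
  rw [sub_eq_add_neg 1, ← neg_div, ← h]
  ring

lemma g_nonneg (ρ : ℝ) : 0 ≤ g ρ := by
  rw [g_eq_one_sub_binEntropy, sub_nonneg, div_le_one (log_pos one_lt_two)]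
  exact binEntropy_le_log_two

lemma g_eq_zero_iff_arctan_eq_zero (ρ : ℝ) : g ρ = 0 ↔ arctan (ρ / √(1 - ρ ^ 2)) = 0 := by
  rw [g_eq_one_sub_binEntropy, sub_eq_zero, eq_comm, div_eq_one_iff_eq (log_pos one_lt_two).ne',
    binEntropy_eq_log_two, one_div 2, add_eq_left, mul_eq_zero,
    or_iff_right (by simp [pi_ne_zero])]

lemma g_eq_zero_iff {ρ : ℝ} (hρ : ρ ^ 2 < 1) : g ρ = 0 ↔ ρ = 0 := by
  rw [g_eq_zero_iff_arctan_eq_zero, arctan_eq_zero_iff,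
    div_eq_zero_iff, sqrt_eq_zero', or_iff_left (by linarith)]

lemma two_rpow_sub_one_eq_zero_iff (x : ℝ) : (2 : ℝ) ^ x - 1 = 0 ↔ x = 0 := by
  rw [sub_eq_zero, ← rpow_zero 2, rpow_right_inj two_pos (by norm_num)]

lemma sq_two_rpow_sub_one_lt_one {x : ℝ} (hx : x < 1) : ((2 : ℝ) ^ x - 1) ^ 2 < 1 := by
  have hpos : 0 < (2 : ℝ) ^ x := rpow_pos_of_pos two_pos x
  have hlt : (2 : ℝ) ^ x < 2 := by
    simpa using rpow_lt_rpow_of_exponent_lt one_lt_two hx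
  nlinarith

/-- `g ρ ≥ 0` on `(-1,1)` with equality iff `ρ = 0`; consequently the market information
`I²_m = g(2^(2𝓗-1) - 1)` of an fBm with Hurst exponent `𝓗 ∈ (0,1)` vanishes iff `𝓗 = 1/2`. -/
theorem market_information_nonneg_zero_iff :
    (∀ ρ ∈ Set.Ioo (-1 : ℝ) 1, 0 ≤ g ρ ∧ (g ρ = 0 ↔ ρ = 0)) ∧
    (∀ H ∈ Set.Ioo (0 : ℝ) 1,
      (g ((2 : ℝ) ^ (2 * H - 1) - 1) = 0 ↔ H = 1 / 2)) := by
  refine ⟨fun ρ hρ ↦ ⟨g_nonneg ρ, g_eq_zero_iff (by nlinarith [hρ.1, hρ.2])⟩,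
    fun H hH ↦ ?_⟩
  rw [g_eq_zero_iff (sq_two_rpow_sub_one_lt_one (by linarith [hH.2])),
    two_rpow_sub_one_eq_zero_iff]
  constructor <;> intro h <;> linarith
end

section
/- Let 𝓗 ∈ (0,1) and m > 0, and set h(x) = 2·cosh(𝓗x) − (2·sinh(x/2))^{2𝓗} for x ≥ 0. Then the correlation of consecutive increments of the delampertized fractional Brownian motion, ρ(θ) = (2 − h(2mθ))/(4 − 2·h(mθ)) − 1, converges as θ → 0⁺ to 2^{2𝓗−1} − 1, the correlation of consecutive increments of the fractional Brownian motion itself. -/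
/-!
Write `N(x) = 2 - h(x) = (2 sinh(x/2))^(2𝓗) - 2 (cosh(𝓗x) - 1)`. Since `sinh y ~ y` and
`cosh y - 1 = O(y²) = o(y^(2𝓗))` for `𝓗 < 1`, `N(x) ~ x^(2𝓗)` as `x → 0⁺`. Hence
`N(2x)/N(x) → 2^(2𝓗)`, and `ρ(θ) = N(2mθ)/(2 N(mθ)) - 1 → 2^(2𝓗-1) - 1`.
-/

open Real Filter Topology

lemma tendsto_const_mul_nhdsGT_zero {c : ℝ} (hc : 0 < c) :
    Tendsto (c * ·) (𝓝[>] 0) (𝓝[>] 0) := by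
  simpa only [comap_mulLeft_nhdsGT_zero hc] using tendsto_comap (f := (c * ·)) (x := 𝓝[>] (0:ℝ))

lemma tendsto_sinh_mul_div_self (c : ℝ) :
    Tendsto (fun x => sinh (c * x) / x) (𝓝[≠] 0) (𝓝 c) := by
  have hderiv : HasDerivAt (fun x => sinh (c * x)) c 0 := by
    simpa using ((hasDerivAt_id (0:ℝ)).const_mul c).sinh
  refine hderiv.tendsto_slope.congr fun x => ?_
  simp [slope_def_field]

lemma tendsto_two_mul_sinh_half_rpow_div_rpow (p : ℝ) :
    Tendsto (fun x => (2 * sinh (x / 2)) ^ p / x ^ p) (𝓝[>] 0) (𝓝 1) := by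
  have hbase : Tendsto (fun x => 2 * (sinh (2⁻¹ * x) / x)) (𝓝[>] 0) (𝓝 1) := by
    simpa using ((tendsto_sinh_mul_div_self 2⁻¹).const_mul 2).mono_left (nhdsGT_le_nhdsNE 0)
  have hpow := ((continuousAt_rpow_const 1 p (Or.inl one_ne_zero)).tendsto.comp hbase)
  rw [one_rpow] at hpow
  refine hpow.congr' ?_
  filter_upwards [self_mem_nhdsWithin] with x (hx : 0 < x)
  have hsinh : 0 ≤ sinh (x / 2) := sinh_nonneg_iff.mpr (by positivity)
  rw [Function.comp_apply, ← div_rpow (by positivity) hx.le, mul_div_assoc, inv_mul_eq_div]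

lemma tendsto_cosh_mul_sub_one_div_rpow (c : ℝ) {p : ℝ} (hp : p < 2) :
    Tendsto (fun x => (cosh (c * x) - 1) / x ^ p) (𝓝[>] 0) (𝓝 0) := by
  have hsq : Tendsto (fun x => 2 * (sinh (c / 2 * x) / x) ^ 2) (𝓝[>] 0) (𝓝 (2 * (c / 2) ^ 2)) :=
    (((tendsto_sinh_mul_div_self (c / 2)).pow 2).const_mul 2).mono_left (nhdsGT_le_nhdsNE 0)
  have hpow : Tendsto (fun x : ℝ => x ^ (2 - p)) (𝓝[>] 0) (𝓝 0) := by
    simpa [zero_rpow (sub_pos.mpr hp).ne'] using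
      ((continuousAt_rpow_const 0 (2 - p) (Or.inr (sub_pos.mpr hp).le)).tendsto).mono_left
        nhdsWithin_le_nhds
  have hlim : Tendsto (fun x => 2 * (sinh (c / 2 * x) / x) ^ 2 * x ^ (2 - p)) (𝓝[>] 0) (𝓝 0) := by
    simpa using hsq.mul hpow
  refine hlim.congr' ?_
  filter_upwards [self_mem_nhdsWithin] with x (hx : 0 < x)
  have hcosh : cosh (c * x) - 1 = 2 * sinh (c / 2 * x) ^ 2 := by
    rw [show c * x = 2 * (c / 2 * x) by ring, cosh_two_mul, cosh_sq]; ring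
  rw [hcosh, rpow_sub hx, rpow_two]
  field_simp

lemma tendsto_comp_mul_div_of_tendsto_div_rpow {f : ℝ → ℝ} {p L c : ℝ} (hL : L ≠ 0) (hc : 0 < c)
    (hf : Tendsto (fun x => f x / x ^ p) (𝓝[>] 0) (𝓝 L)) :
    Tendsto (fun x => f (c * x) / f x) (𝓝[>] 0) (𝓝 (c ^ p)) := by
  have hlim := ((hf.comp (tendsto_const_mul_nhdsGT_zero hc)).div hf hL).mul_const (c ^ p)
  rw [div_self hL, one_mul] at hlim
  refine hlim.congr' ?_
  filter_upwards [self_mem_nhdsWithin] with x (hx : 0 < x)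
  have hxp : x ^ p ≠ 0 := (rpow_pos_of_pos hx p).ne'
  have hcp : c ^ p ≠ 0 := (rpow_pos_of_pos hc p).ne'
  simp only [Pi.div_apply, Function.comp_apply, mul_rpow hc.le hx.le]
  rcases eq_or_ne (f x) 0 with hfx | hfx
  · simp [hfx] -- both sides vanish, as `a / 0 = 0`
  · field_simp

lemma tendsto_two_sub_two_mul_cosh_sub_sinh_rpow_div_rpow {H : ℝ} (hH : H < 1) :
    Tendsto (fun x => (2 - (2 * cosh (H * x) - (2 * sinh (x / 2)) ^ (2 * H))) / x ^ (2 * H))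
      (𝓝[>] 0) (𝓝 1) := by
  have hlim := (tendsto_two_mul_sinh_half_rpow_div_rpow (2 * H)).sub
    ((tendsto_cosh_mul_sub_one_div_rpow H (p := 2 * H) (by linarith)).const_mul 2)
  rw [mul_zero, sub_zero] at hlim
  refine hlim.congr fun x => ?_
  ring

/-- With `h(x) = 2 cosh(𝓗x) - (2 sinh(x/2))^(2𝓗)`, the correlation of consecutive increments
of the delampertized fBm, `ρ(θ) = (2 - h(2mθ))/(4 - 2h(mθ)) - 1`, tends as `θ → 0⁺` to
`2^(2𝓗-1) - 1`, the correlation of consecutive increments of the fBm itself. -/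
theorem delampertized_correlation_tendsto_fbm_correlation
    (H m : ℝ) (hH : H ∈ Set.Ioo (0 : ℝ) 1) (hm : 0 < m)
    (h : ℝ → ℝ)
    (hh : ∀ x : ℝ, h x = 2 * Real.cosh (H * x) - (2 * Real.sinh (x / 2)) ^ (2 * H)) :
    Tendsto (fun θ : ℝ => (2 - h (2 * m * θ)) / (4 - 2 * h (m * θ)) - 1)
      (nhdsWithin 0 (Set.Ioi 0)) (nhds ((2 : ℝ) ^ (2 * H - 1) - 1)) := by
  have hN : Tendsto (fun x => (2 - h x) / x ^ (2 * H)) (𝓝[>] 0) (𝓝 1) := by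
    simpa only [hh] using tendsto_two_sub_two_mul_cosh_sub_sinh_rpow_div_rpow hH.2
  have hratio := ((tendsto_comp_mul_div_of_tendsto_div_rpow one_ne_zero two_pos hN).comp
    (tendsto_const_mul_nhdsGT_zero hm)).div_const 2
  rw [← rpow_sub_one two_ne_zero] at hratio
  refine (hratio.sub_const 1).congr fun θ => ?_
  simp only [Function.comp_apply]
  rw [mul_assoc, show 4 - 2 * h (m * θ) = (2 - h (m * θ)) * 2 by ring, div_div]
end
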